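/- For a discrete curve with edge frame (Tᵉ, Nᵉ, Bᵉ) and vertex frame (Tᵛ, Nᵛ, Bᵛ), one has Nᵛᵢ = Bᵛᵢ × Tᵛᵢ for every i ∈ ℤ. -/

import Mathlib

/-!
At an even vertex the binormal is constant, `B i = B (i + 1)`, and orthogonal to both adjacent
tangents; at an odd vertex the midpoint condition makes the tangent constant, `T i = T (i + 1)`,
and both adjacent binormals are orthogonal to it. Either way `2 (MN)ᵢ = (MB)ᵢ × (MT)ᵢ` with
`(MB)ᵢ ⊥ (MT)ᵢ`, and since `‖u × v‖ = ‖u‖ ‖v‖` for orthogonal `u, v`, normalisation commutes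
with the cross product.
-/

open RealInnerProductSpace

noncomputable section

/-- Points of a discrete curve live in `ℝ³` with the Euclidean norm. -/
abbrev E3 := EuclideanSpace ℝ (Fin 3)

/-- The cross product on `ℝ³`. -/
def cross3 (u v : E3) : E3 :=
  WithLp.toLp 2 ![u 1 * v 2 - u 2 * v 1, u 2 * v 0 - u 0 * v 2, u 0 * v 1 - u 1 * v 0]

open Matrix WithLp

lemma cross3_eq_crossProduct (u v : E3) : cross3 u v = toLp 2 (ofLp u ⨯₃ ofLp v) := rfl

lemma cross3_add_left (u u' v : E3) : cross3 (u + u') v = cross3 u v + cross3 u' v := by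
  simp only [cross3_eq_crossProduct, ofLp_add, map_add, LinearMap.add_apply, toLp_add]

lemma cross3_add_right (u v v' : E3) : cross3 u (v + v') = cross3 u v + cross3 u v' := by
  simp only [cross3_eq_crossProduct, ofLp_add, map_add, toLp_add]

lemma cross3_smul_left (c : ℝ) (u v : E3) : cross3 (c • u) v = c • cross3 u v := by
  simp only [cross3_eq_crossProduct, ofLp_smul, map_smul, LinearMap.smul_apply, toLp_smul]

lemma cross3_smul_right (c : ℝ) (u v : E3) : cross3 u (c • v) = c • cross3 u v := by
  simp only [cross3_eq_crossProduct, ofLp_smul, map_smul, toLp_smul]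

lemma EuclideanSpace.real_inner_eq_dotProduct {ι : Type*} [Fintype ι] (u v : EuclideanSpace ℝ ι) :
    ⟪u, v⟫ = ofLp u ⬝ᵥ ofLp v := by
  rw [EuclideanSpace.inner_eq_star_dotProduct, star_trivial, dotProduct_comm]

lemma inner_cross3_self_left (u v : E3) : ⟪cross3 u v, u⟫ = 0 := by
  rw [EuclideanSpace.real_inner_eq_dotProduct, cross3_eq_crossProduct, dotProduct_comm]
  exact dot_self_cross _ _

lemma inner_cross3_self_right (u v : E3) : ⟪cross3 u v, v⟫ = 0 := by
  rw [EuclideanSpace.real_inner_eq_dotProduct, cross3_eq_crossProduct, dotProduct_comm]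
  exact dot_cross_self _ _

lemma norm_cross3_of_inner_eq_zero {u v : E3} (h : ⟪u, v⟫ = 0) :
    ‖cross3 u v‖ = ‖u‖ * ‖v‖ := by
  have lagrange : ‖cross3 u v‖ ^ 2 = (‖u‖ * ‖v‖) ^ 2 := by
    simp only [← real_inner_self_eq_norm_sq, mul_pow, EuclideanSpace.real_inner_eq_dotProduct] at h ⊢
    rw [cross3_eq_crossProduct, cross_dot_cross, h]
    ring
  exact (pow_left_inj₀ (norm_nonneg _) (by positivity) two_ne_zero).1 lagrange

lemma inv_norm_smul_cross3_of_inner_eq_zero {u v : E3} (h : ⟪u, v⟫ = 0) :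
    ‖cross3 u v‖⁻¹ • cross3 u v = cross3 (‖u‖⁻¹ • u) (‖v‖⁻¹ • v) := by
  rw [norm_cross3_of_inner_eq_zero h, cross3_smul_left, cross3_smul_right, smul_smul, mul_inv,
    mul_comm]

lemma inv_norm_smul_smul_of_pos {E : Type*} [NormedAddCommGroup E] [NormedSpace ℝ E] {c : ℝ}
    (hc : 0 < c) (x : E) : ‖c • x‖⁻¹ • (c • x) = ‖x‖⁻¹ • x := by
  rw [norm_smul, Real.norm_of_nonneg hc.le, smul_smul, mul_inv, mul_right_comm,
    inv_mul_cancel₀ hc.ne', one_mul]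

lemma sub_eq_sub_of_eq_inv_two_smul_add {E : Type*} [AddCommGroup E] [Module ℝ E] {x y z : E}
    (h : y = (2 : ℝ)⁻¹ • (x + z)) : x - y = y - z := by
  subst h
  module

theorem vertex_frame_normal_eq_cross_general
    (γ T N B : ℤ → E3)
    (hmid : ∀ i : ℤ, Even i → γ i = (2 : ℝ)⁻¹ • (γ (i + 1) + γ (i - 1)))
    (hT : ∀ i : ℤ, T i = γ (i + 1) - γ i)
    (hBeven : ∀ i : ℤ, Even i →
      B i = ‖cross3 (T i) (T (i + 1))‖⁻¹ • cross3 (T i) (T (i + 1)))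
    (hBodd : ∀ i : ℤ, Odd i → B i = B (i - 1))
    (hN : ∀ i : ℤ, N i = cross3 (B i) (T i))
    (Tv Nv Bv : ℤ → E3)
    (hTv : ∀ i : ℤ, Tv i = ‖T (i + 1) + T i‖⁻¹ • (T (i + 1) + T i))
    (hNv : ∀ i : ℤ, Nv i = ‖N (i + 1) + N i‖⁻¹ • (N (i + 1) + N i))
    (hBv : ∀ i : ℤ, Bv i = ‖B (i + 1) + B i‖⁻¹ • (B (i + 1) + B i))
    : ∀ i : ℤ, Nv i = cross3 (Bv i) (Tv i) := by
  have hB_perp : ∀ i, Even i → ⟪B i, T i⟫ = 0 ∧ ⟪B i, T (i + 1)⟫ = 0 := fun i hi => by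
    simp only [hBeven i hi, real_inner_smul_left, inner_cross3_self_left,
      inner_cross3_self_right, mul_zero, and_self]
  have hframe : ∀ i, (2 : ℝ) • (N (i + 1) + N i) = cross3 (B (i + 1) + B i) (T (i + 1) + T i) ∧
      ⟪B (i + 1) + B i, T (i + 1) + T i⟫ = 0 := fun i => by
    rcases Int.even_or_odd i with hi | hi
    · have hB : B (i + 1) = B i := by simpa using hBodd (i + 1) hi.add_one
      obtain ⟨h₀, h₁⟩ := hB_perp i hi
      rw [hN, hN, hB]
      constructor
      · rw [two_smul, cross3_add_left, cross3_add_right]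
      · simp only [inner_add_left, inner_add_right, h₀, h₁, add_zero]
    · have hT' : T (i + 1) = T i := by
        rw [hT, hT]
        exact sub_eq_sub_of_eq_inv_two_smul_add (by simpa using hmid (i + 1) hi.add_one)
      have h₀ : ⟪B (i + 1), T i⟫ = 0 := hT' ▸ (hB_perp (i + 1) hi.add_one).1
      have h₁ : ⟪B i, T i⟫ = 0 := by
        simpa [hBodd i hi] using (hB_perp (i - 1) (hi.sub_odd odd_one)).2
      rw [hN, hN, hT']
      constructor
      · rw [two_smul, cross3_add_right, cross3_add_left]
      · simp only [inner_add_left, inner_add_right, h₀, h₁, add_zero]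
  intro i
  obtain ⟨hMN, h_perp⟩ := hframe i
  rw [hNv, hBv, hTv, ← inv_norm_smul_smul_of_pos two_pos, hMN,
    inv_norm_smul_cross3_of_inner_eq_zero h_perp]

/-- For a discrete curve, the vertex frame satisfies `Nᵛᵢ = Bᵛᵢ × Tᵛᵢ` for every `i`. -/
theorem vertex_frame_normal_eq_cross
    (γ T N B : ℤ → E3)
    (hlen : ∀ i : ℤ, ‖γ (i + 1) - γ i‖ = 1)
    (hmid : ∀ i : ℤ, Even i → γ i = (2 : ℝ)⁻¹ • (γ (i + 1) + γ (i - 1)))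
    (hT : ∀ i : ℤ, T i = γ (i + 1) - γ i)
    (hcross : ∀ i : ℤ, Even i → cross3 (T i) (T (i + 1)) ≠ 0)
    (hBeven : ∀ i : ℤ, Even i →
      B i = ‖cross3 (T i) (T (i + 1))‖⁻¹ • cross3 (T i) (T (i + 1)))
    (hBodd : ∀ i : ℤ, Odd i → B i = B (i - 1))
    (hN : ∀ i : ℤ, N i = cross3 (B i) (T i))
    (Tv Nv Bv : ℤ → E3)
    (hMT : ∀ i : ℤ, T (i + 1) + T i ≠ 0)
    (hMN : ∀ i : ℤ, N (i + 1) + N i ≠ 0)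
    (hMB : ∀ i : ℤ, B (i + 1) + B i ≠ 0)
    (hTv : ∀ i : ℤ, Tv i = ‖T (i + 1) + T i‖⁻¹ • (T (i + 1) + T i))
    (hNv : ∀ i : ℤ, Nv i = ‖N (i + 1) + N i‖⁻¹ • (N (i + 1) + N i))
    (hBv : ∀ i : ℤ, Bv i = ‖B (i + 1) + B i‖⁻¹ • (B (i + 1) + B i))
    : ∀ i : ℤ, Nv i = cross3 (Bv i) (Tv i) :=
  vertex_frame_normal_eq_cross_general γ T N B hmid hT hBeven hBodd hN Tv Nv Bv hTv hNv hBv
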